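/- (Type-A fundamental ribbon operators multiply according to the opposite algebra (H^cop ⊗ H)^op.) Define, for a, h ∈ H, the fundamental ribbon operators on H* by F^{(a,h)}(τ_L, ±) := ε(h)·T̃^a_± (left-handed direct triangle) and F^{(a,h)}(τ̃_R, ±) := ε(a)·L̃^h_± (right-handed dual triangle). Then for each fixed sign and all a, a', h, h' ∈ H: F^{(a,h)}(τ_L,±) ∘ F^{(a',h')}(τ_L,±) = F^{(a'a, h'h)}(τ_L,±) and F^{(a,h)}(τ̃_R,±) ∘ F^{(a',h')}(τ̃_R,±) = F^{(a'a, h'h)}(τ̃_R,±), where a'a and h'h are products in H. -/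

import Mathlib

/-!
Common setup for formalizing "Ribbon operators in the semidual lattice code model"
(Soglohu–Osei–Osumanu).

`H` is a Hopf algebra over `ℂ`.  Its dual Hopf algebra `H*` is realised as
`Module.Dual ℂ H`, with evaluation pairing `⟨h, φ⟩ = φ h`.  The multiplication of
`H*` is dual to the comultiplication of `H` and the comultiplication of `H*` is
dual to the multiplication of `H`; consequently every edge operator below, given
in the paper by a Sweedler formula on `H*`, is pre-composition
(`LinearMap.dualMap`) with an explicit linear endomorphism of `H`.  For instance
`L^h₊(φ) = ⟨h, S(φ₍₁₎) φ₍₃₎⟩ φ₍₂₎` is exactly `(L^h₊ φ)(x) = Σ φ (S h₍₁₎ * x * h₍₂₎)`.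
Since the antipode is assumed involutive (`S⁻¹ = S`), occurrences of `S⁻¹` are
rendered as `S`.
-/

open TensorProduct

noncomputable section

namespace SemidualKitaev

variable {H : Type} [Ring H] [HopfAlgebra ℂ H]

/-- The antipode of `H`. -/
abbrev S : H →ₗ[ℂ] H := HopfAlgebra.antipode (R := ℂ)

/-- The comultiplication of `H`. -/
abbrev Δ : H →ₗ[ℂ] H ⊗[ℂ] H := Coalgebra.comul (R := ℂ)

/-- The counit of `H`. -/
abbrev ε : H →ₗ[ℂ] ℂ := Coalgebra.counit (R := ℂ)

/-- `sandwich (u ⊗ v) : x ↦ u * x * v`. -/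
def sandwich : H ⊗[ℂ] H →ₗ[ℂ] H →ₗ[ℂ] H :=
  TensorProduct.lift <| LinearMap.mk₂ ℂ
    (fun u v => (LinearMap.mulRight ℂ v) ∘ₗ (LinearMap.mulLeft ℂ u))
    (fun u u' v => LinearMap.ext fun x => by simp [add_mul])
    (fun c u v => LinearMap.ext fun x => by simp [smul_mul_assoc])
    (fun u v v' => LinearMap.ext fun x => by simp [mul_add])
    (fun c u v => LinearMap.ext fun x => by simp [mul_smul_comm])

@[simp] lemma sandwich_tmul (u v x : H) : sandwich (u ⊗ₜ[ℂ] v) x = u * x * v := rfl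

/-! ### Edge (triangle) operators on `H* = Module.Dual ℂ H`

Left-module versions (eq. (3.3) of the paper). -/

/-- `L^h₊(φ) = ⟨h, S(φ₍₁₎) φ₍₃₎⟩ φ₍₂₎`, i.e. `(L^h₊ φ)(x) = Σ φ (S h₍₁₎ * x * h₍₂₎)`. -/
def Lp (h : H) : Module.Dual ℂ H →ₗ[ℂ] Module.Dual ℂ H :=
  (sandwich ((TensorProduct.map S LinearMap.id) (Δ h))).dualMap

/-- `L^h₋(φ) = ⟨h, φ₍₃₎ S⁻¹(φ₍₁₎)⟩ φ₍₂₎`, i.e. `(L^h₋ φ)(x) = Σ φ (S⁻¹ h₍₂₎ * x * h₍₁₎)`,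
with `S⁻¹ = S`. -/
def Lm (h : H) : Module.Dual ℂ H →ₗ[ℂ] Module.Dual ℂ H :=
  (sandwich ((TensorProduct.map S LinearMap.id) ((TensorProduct.comm ℂ H H) (Δ h)))).dualMap

/-- `T^a₊(φ) = ⟨S a, φ₍₁₎⟩ φ₍₂₎`, i.e. `(T^a₊ φ)(x) = φ (S a * x)`. -/
def Tp (a : H) : Module.Dual ℂ H →ₗ[ℂ] Module.Dual ℂ H :=
  (LinearMap.mulLeft ℂ (S a)).dualMap

/-- `T^a₋(φ) = ⟨a, φ₍₂₎⟩ φ₍₁₎`, i.e. `(T^a₋ φ)(x) = φ (x * a)`. -/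
def Tm (a : H) : Module.Dual ℂ H →ₗ[ℂ] Module.Dual ℂ H :=
  (LinearMap.mulRight ℂ a).dualMap

/-! Right-module versions (eq. (3.14) of the paper). -/

/-- `L̃^h₊(φ) = ⟨h, S(φ₍₃₎) φ₍₁₎⟩ φ₍₂₎`, i.e. `(L̃^h₊ φ)(x) = Σ φ (h₍₂₎ * x * S h₍₁₎)`. -/
def Ltp (h : H) : Module.Dual ℂ H →ₗ[ℂ] Module.Dual ℂ H :=
  (sandwich ((TensorProduct.map LinearMap.id S) ((TensorProduct.comm ℂ H H) (Δ h)))).dualMap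

/-- `L̃^h₋(φ) = ⟨h, φ₍₁₎ S⁻¹(φ₍₃₎)⟩ φ₍₂₎`, i.e. `(L̃^h₋ φ)(x) = Σ φ (h₍₁₎ * x * S⁻¹ h₍₂₎)`,
with `S⁻¹ = S`. -/
def Ltm (h : H) : Module.Dual ℂ H →ₗ[ℂ] Module.Dual ℂ H :=
  (sandwich ((TensorProduct.map LinearMap.id S) (Δ h))).dualMap

/-- `T̃^a₊(φ) = ⟨a, φ₍₁₎⟩ φ₍₂₎`, i.e. `(T̃^a₊ φ)(x) = φ (a * x)`. -/
def Ttp (a : H) : Module.Dual ℂ H →ₗ[ℂ] Module.Dual ℂ H :=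
  (LinearMap.mulLeft ℂ a).dualMap

/-- `T̃^a₋(φ) = ⟨S⁻¹ a, φ₍₂₎⟩ φ₍₁₎`, i.e. `(T̃^a₋ φ)(x) = φ (x * S⁻¹ a)`, with `S⁻¹ = S`. -/
def Ttm (a : H) : Module.Dual ℂ H →ₗ[ℂ] Module.Dual ℂ H :=
  (LinearMap.mulRight ℂ (S a)).dualMap

/-- The antipode `S_{H*}` of the dual Hopf algebra: `S_{H*}(φ) = φ ∘ S`. -/
def Sdual : Module.Dual ℂ H →ₗ[ℂ] Module.Dual ℂ H := (S (H := H)).dualMap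

/-- The composite edge operator `M^{(a,h)}₊ = T^a₊ ∘ L^h₊`. -/
def Mp (a h : H) : Module.Dual ℂ H →ₗ[ℂ] Module.Dual ℂ H := Tp a ∘ₗ Lp h

/-- The composite edge operator `M^{(a,h)}₋ = T^a₋ ∘ L^h₋`. -/
def Mm (a h : H) : Module.Dual ℂ H →ₗ[ℂ] Module.Dual ℂ H := Tm a ∘ₗ Lm h

/-- The right action of `M(H)` on `H*` (eq. (2.10) of the paper):
`φ ◁ (a ⊗ h) = ⟨a h₍₁₎, φ₍₁₎⟩ ⟨S h₍₂₎, φ₍₃₎⟩ φ₍₂₎`,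
i.e. `(ract φ a h)(x) = Σ φ (a * h₍₁₎ * x * S h₍₂₎)`. -/
def ract (φ : Module.Dual ℂ H) (a h : H) : Module.Dual ℂ H :=
  (sandwich ((TensorProduct.map (LinearMap.mulLeft ℂ a) S) (Δ h))).dualMap φ

/-- The (convolution) multiplication of the dual Hopf algebra `H*`:
`(φ ∗ ψ)(x) = Σ φ(x₍₁₎) ψ(x₍₂₎)`. -/
def dualMul (φ ψ : Module.Dual ℂ H) : Module.Dual ℂ H :=
  (LinearMap.mul' ℂ ℂ) ∘ₗ (TensorProduct.map φ ψ) ∘ₗ Δ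

/-- The opposite multiplication `∗op` of `H*`. -/
def dualMulOp (φ ψ : Module.Dual ℂ H) : Module.Dual ℂ H := dualMul ψ φ

/-! ### Iterated comultiplications, `Δⁿ h = Σ h₍₁₎ ⊗ (h₍₂₎ ⊗ (⋯ ⊗ h₍ₙ₊₁₎))` -/

def Δ2 : H →ₗ[ℂ] H ⊗[ℂ] (H ⊗[ℂ] H) := (LinearMap.lTensor H Δ) ∘ₗ Δ
def Δ3 : H →ₗ[ℂ] H ⊗[ℂ] (H ⊗[ℂ] (H ⊗[ℂ] H)) := (LinearMap.lTensor H Δ2) ∘ₗ Δ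
def Δ4 : H →ₗ[ℂ] H ⊗[ℂ] (H ⊗[ℂ] (H ⊗[ℂ] (H ⊗[ℂ] H))) := (LinearMap.lTensor H Δ3) ∘ₗ Δ
def Δ5 : H →ₗ[ℂ] H ⊗[ℂ] (H ⊗[ℂ] (H ⊗[ℂ] (H ⊗[ℂ] (H ⊗[ℂ] H)))) :=
  (LinearMap.lTensor H Δ4) ∘ₗ Δ
def Δ6 : H →ₗ[ℂ] H ⊗[ℂ] (H ⊗[ℂ] (H ⊗[ℂ] (H ⊗[ℂ] (H ⊗[ℂ] (H ⊗[ℂ] H))))) :=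
  (LinearMap.lTensor H Δ5) ∘ₗ Δ
def Δ7 : H →ₗ[ℂ] H ⊗[ℂ] (H ⊗[ℂ] (H ⊗[ℂ] (H ⊗[ℂ] (H ⊗[ℂ] (H ⊗[ℂ] (H ⊗[ℂ] H)))))) :=
  (LinearMap.lTensor H Δ6) ∘ₗ Δ
def Δ8 : H →ₗ[ℂ]
    H ⊗[ℂ] (H ⊗[ℂ] (H ⊗[ℂ] (H ⊗[ℂ] (H ⊗[ℂ] (H ⊗[ℂ] (H ⊗[ℂ] (H ⊗[ℂ] H))))))) :=
  (LinearMap.lTensor H Δ7) ∘ₗ Δ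
def Δ9 : H →ₗ[ℂ]
    H ⊗[ℂ] (H ⊗[ℂ] (H ⊗[ℂ] (H ⊗[ℂ] (H ⊗[ℂ] (H ⊗[ℂ] (H ⊗[ℂ] (H ⊗[ℂ] (H ⊗[ℂ] H)))))))) :=
  (LinearMap.lTensor H Δ8) ∘ₗ Δ

lemma mulLeft_add (a a' : H) :
    LinearMap.mulLeft ℂ (a + a') = LinearMap.mulLeft ℂ a + LinearMap.mulLeft ℂ a' :=
  LinearMap.ext fun x => add_mul a a' x

lemma mulLeft_smul (c : ℂ) (a : H) :
    LinearMap.mulLeft ℂ (c • a) = c • LinearMap.mulLeft ℂ a :=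
  LinearMap.ext fun x => smul_mul_assoc c a x

/-! ### The mirror bicrossproduct `M(H) = H^cop ⋈ H` on the vector space `H ⊗ H` -/

/-- `(h₍₁₎ ⊗ h₍₂₎) ⊗ h₍₃₎` version of the 2-fold comultiplication. -/
def Δ2' : H →ₗ[ℂ] (H ⊗[ℂ] H) ⊗[ℂ] H := (LinearMap.rTensor H Δ) ∘ₗ Δ

/-- `mulAction2 ((u ⊗ v) ⊗ w) (b ⊗ g) = (u * b * v) ⊗ (w * g)`. -/
def mulAction2 : (H ⊗[ℂ] H) ⊗[ℂ] H →ₗ[ℂ] (H ⊗[ℂ] H) →ₗ[ℂ] (H ⊗[ℂ] H) :=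
  TensorProduct.lift <| LinearMap.mk₂ ℂ
    (fun (uv : H ⊗[ℂ] H) (w : H) =>
      TensorProduct.map (sandwich uv) (LinearMap.mulLeft ℂ w))
    (fun uv uv' w => by (try dsimp only); rw [map_add, TensorProduct.map_add_left])
    (fun c uv w => by (try dsimp only); rw [map_smul, TensorProduct.map_smul_left])
    (fun uv w w' => by (try dsimp only); rw [mulLeft_add, TensorProduct.map_add_right])
    (fun c uv w => by (try dsimp only); rw [mulLeft_smul, TensorProduct.map_smul_right])

/-- The product of the mirror bicrossproduct `M(H)`:
`μM (a ⊗ h) (b ⊗ g) = Σ (a * h₍₁₎ * b * S h₍₂₎) ⊗ (h₍₃₎ * g)`. -/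
def μM : (H ⊗[ℂ] H) →ₗ[ℂ] (H ⊗[ℂ] H) →ₗ[ℂ] (H ⊗[ℂ] H) :=
  TensorProduct.lift <| LinearMap.mk₂ ℂ
    (fun (a h : H) =>
      mulAction2 ((TensorProduct.map (TensorProduct.map (LinearMap.mulLeft ℂ a) S)
        LinearMap.id) (Δ2' h)))
    (fun a a' h => by
      (try dsimp only)
      rw [mulLeft_add, TensorProduct.map_add_left, TensorProduct.map_add_left,
        LinearMap.add_apply, map_add])
    (fun c a h => by
      (try dsimp only)
      rw [mulLeft_smul, TensorProduct.map_smul_left, TensorProduct.map_smul_left,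
        LinearMap.smul_apply, map_smul])
    (fun a h h' => by (try dsimp only); rw [map_add, map_add, map_add])
    (fun c a h => by (try dsimp only); rw [map_smul, map_smul, map_smul])

/-- The unit `1 ⊗ 1` of `M(H)`. -/
def oneM : H ⊗[ℂ] H := (1 : H) ⊗ₜ[ℂ] (1 : H)

/-- The counit of `M(H)`: `εM (a ⊗ h) = ε a * ε h`. -/
def εM : H ⊗[ℂ] H →ₗ[ℂ] ℂ :=
  (TensorProduct.lid ℂ ℂ).toLinearMap ∘ₗ TensorProduct.map ε ε

/-- Auxiliary map for the coproduct of `M(H)`: for fixed `a₁, a₂`, it sends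
`h₁ ⊗ (h₂ ⊗ (h₃ ⊗ h₄))` to `(a₂ ⊗ h₂) ⊗ ((a₁ * h₁ * S h₃) ⊗ h₄)`. -/
def deltaMAux (a₁ a₂ : H) :
    H ⊗[ℂ] (H ⊗[ℂ] (H ⊗[ℂ] H)) →ₗ[ℂ] (H ⊗[ℂ] H) ⊗[ℂ] (H ⊗[ℂ] H) :=
  (TensorProduct.map (TensorProduct.mk ℂ H H a₂) LinearMap.id) ∘ₗ
  (TensorProduct.map LinearMap.id
    (TensorProduct.map (LinearMap.mul' ℂ H) LinearMap.id)) ∘ₗ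
  (TensorProduct.map LinearMap.id (TensorProduct.assoc ℂ H H H).symm.toLinearMap) ∘ₗ
  (TensorProduct.assoc ℂ H H (H ⊗[ℂ] H)).toLinearMap ∘ₗ
  (TensorProduct.map (TensorProduct.comm ℂ H H).toLinearMap LinearMap.id) ∘ₗ
  (TensorProduct.assoc ℂ H H (H ⊗[ℂ] H)).symm.toLinearMap ∘ₗ
  (TensorProduct.map (LinearMap.mulLeft ℂ a₁)
    (TensorProduct.map LinearMap.id (TensorProduct.map S LinearMap.id)))

lemma deltaMAux_add_left (a₁ a₁' a₂ : H) :
    deltaMAux (a₁ + a₁') a₂ = deltaMAux a₁ a₂ + deltaMAux (H := H) a₁' a₂ := by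
  unfold deltaMAux
  rw [mulLeft_add, TensorProduct.map_add_left]
  simp only [LinearMap.comp_add]

lemma deltaMAux_smul_left (c : ℂ) (a₁ a₂ : H) :
    deltaMAux (c • a₁) a₂ = c • deltaMAux (H := H) a₁ a₂ := by
  unfold deltaMAux
  rw [mulLeft_smul, TensorProduct.map_smul_left]
  simp only [LinearMap.comp_smul]

lemma deltaMAux_add_right (a₁ a₂ a₂' : H) :
    deltaMAux a₁ (a₂ + a₂') = deltaMAux a₁ a₂ + deltaMAux (H := H) a₁ a₂' := by
  unfold deltaMAux
  rw [map_add, TensorProduct.map_add_left]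
  simp only [LinearMap.add_comp]

lemma deltaMAux_smul_right (c : ℂ) (a₁ a₂ : H) :
    deltaMAux a₁ (c • a₂) = c • deltaMAux (H := H) a₁ a₂ := by
  unfold deltaMAux
  rw [map_smul, TensorProduct.map_smul_left]
  simp only [LinearMap.smul_comp]

/-- `deltaG (a₁ ⊗ a₂) = deltaMAux a₁ a₂`, assembled linearly. -/
def deltaG : H ⊗[ℂ] H →ₗ[ℂ]
    (H ⊗[ℂ] (H ⊗[ℂ] (H ⊗[ℂ] H)) →ₗ[ℂ] (H ⊗[ℂ] H) ⊗[ℂ] (H ⊗[ℂ] H)) :=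
  TensorProduct.lift <| LinearMap.mk₂ ℂ deltaMAux
    deltaMAux_add_left deltaMAux_smul_left deltaMAux_add_right deltaMAux_smul_right

/-- The coproduct of `M(H)`:
`ΔM (a ⊗ h) = Σ (a₍₂₎ ⊗ h₍₂₎) ⊗ ((a₍₁₎ * h₍₁₎ * S h₍₃₎) ⊗ h₍₄₎)`. -/
def ΔM : H ⊗[ℂ] H →ₗ[ℂ] (H ⊗[ℂ] H) ⊗[ℂ] (H ⊗[ℂ] H) :=
  TensorProduct.lift <| LinearMap.mk₂ ℂ
    (fun (a h : H) => (deltaG (Δ a)) (Δ3 h))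
    (fun a a' h => by (try dsimp only); rw [map_add, map_add, LinearMap.add_apply])
    (fun c a h => by (try dsimp only); rw [map_smul, map_smul, LinearMap.smul_apply])
    (fun a h h' => by (try dsimp only); rw [map_add, map_add])
    (fun c a h => by (try dsimp only); rw [map_smul, map_smul])

/-- The componentwise (tensor-square) product on `M(H) ⊗ M(H)`. -/
def tensorMul2 :
    ((H ⊗[ℂ] H) ⊗[ℂ] (H ⊗[ℂ] H)) →ₗ[ℂ] ((H ⊗[ℂ] H) ⊗[ℂ] (H ⊗[ℂ] H)) →ₗ[ℂ]
      ((H ⊗[ℂ] H) ⊗[ℂ] (H ⊗[ℂ] H)) :=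
  TensorProduct.lift <| LinearMap.mk₂ ℂ
    (fun (u v : H ⊗[ℂ] H) => TensorProduct.map (μM u) (μM v))
    (fun u u' v => by (try dsimp only); rw [map_add, TensorProduct.map_add_left])
    (fun c u v => by (try dsimp only); rw [map_smul, TensorProduct.map_smul_left])
    (fun u v v' => by (try dsimp only); rw [map_add, TensorProduct.map_add_right])
    (fun c u v => by (try dsimp only); rw [map_smul, TensorProduct.map_smul_right])

/-- The antipode candidate of `M(H)`:
`SM (a ⊗ h) = Σ (1 ⊗ S h₍₂₎) · (S (a * h₍₁₎ * S h₍₃₎) ⊗ 1)`,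
where `·` is the mirror product `μM`. -/
def SM : H ⊗[ℂ] H →ₗ[ℂ] H ⊗[ℂ] H :=
  TensorProduct.lift <| LinearMap.mk₂ ℂ
    (fun (a h : H) =>
      (TensorProduct.lift μM)
        ((TensorProduct.map
            ((TensorProduct.mk ℂ H H 1) ∘ₗ S)
            (((TensorProduct.mk ℂ H H).flip 1) ∘ₗ S ∘ₗ (LinearMap.mul' ℂ H) ∘ₗ
              (TensorProduct.map (LinearMap.mulLeft ℂ a) S)))
          ((TensorProduct.assoc ℂ H H H).toLinearMap
            ((TensorProduct.map (TensorProduct.comm ℂ H H).toLinearMap LinearMap.id)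
              ((TensorProduct.assoc ℂ H H H).symm.toLinearMap (Δ2 h))))))
    (fun a a' h => by
      (try dsimp only)
      rw [mulLeft_add, TensorProduct.map_add_left, LinearMap.comp_add, LinearMap.comp_add,
        LinearMap.comp_add, TensorProduct.map_add_right, LinearMap.add_apply, map_add])
    (fun c a h => by
      (try dsimp only)
      rw [mulLeft_smul, TensorProduct.map_smul_left, LinearMap.comp_smul, LinearMap.comp_smul,
        LinearMap.comp_smul, TensorProduct.map_smul_right, LinearMap.smul_apply, map_smul])
    (fun a h h' => by (try dsimp only); simp only [map_add])
    (fun c a h => by (try dsimp only); simp only [map_smul])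

/-- `ℓ ∈ H` is a normalized (two-sided) Haar integral:
`x ℓ = ε(x) ℓ = ℓ x` for all `x`, and `ε(ℓ) = 1`. -/
def IsHaarIntegral (ℓ : H) : Prop :=
  ε ℓ = 1 ∧ ∀ x : H, x * ℓ = ε x • ℓ ∧ ℓ * x = ε x • ℓ

/-- Fourfold tensor product of operators on `H*`, acting on the four edges
`ψ¹ ⊗ (ψ² ⊗ (ψ³ ⊗ ψ⁴))`. -/
def map4 (f₁ f₂ f₃ f₄ : Module.Dual ℂ H →ₗ[ℂ] Module.Dual ℂ H) :
    Module.Dual ℂ H ⊗[ℂ] (Module.Dual ℂ H ⊗[ℂ] (Module.Dual ℂ H ⊗[ℂ] Module.Dual ℂ H))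
      →ₗ[ℂ]
    Module.Dual ℂ H ⊗[ℂ] (Module.Dual ℂ H ⊗[ℂ] (Module.Dual ℂ H ⊗[ℂ] Module.Dual ℂ H)) :=
  TensorProduct.map f₁ (TensorProduct.map f₂ (TensorProduct.map f₃ f₄))


section Conv
variable {C : Type} [AddCommGroup C] [Module ℂ C] [Coalgebra ℂ C]

/-- Convolution product on `Hom(C, H)`. -/
def conv (f g : C →ₗ[ℂ] H) : C →ₗ[ℂ] H :=
  LinearMap.mul' ℂ H ∘ₗ TensorProduct.map f g ∘ₗ Coalgebra.comul

lemma conv_apply_repr (f g : C →ₗ[ℂ] H) {c : C} (r : Coalgebra.Repr ℂ c (C × C)) :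
    conv f g c = ∑ i ∈ r.index, f (r.left i) * g (r.right i) := by
  simp [conv, ← r.eq, map_sum]

/-- Convolution unit. -/
def convOne : C →ₗ[ℂ] H := Algebra.linearMap ℂ H ∘ₗ Coalgebra.counit

lemma conv_one_right (f : C →ₗ[ℂ] H) : conv f convOne = f := by
  apply LinearMap.ext; intro c
  set r := Coalgebra.Repr.arbitrary ℂ c
  have h2 : ∑ i ∈ r.index, Coalgebra.counit (R := ℂ) (r.right i) • r.left i = c := by
    have := congrArg (TensorProduct.rid ℂ C) (Coalgebra.sum_tmul_counit_eq r)
    simp only [map_sum, TensorProduct.rid_tmul, one_smul] at this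
    exact this
  rw [conv_apply_repr f convOne r]
  calc ∑ i ∈ r.index, f (r.left i) * convOne (r.right i)
      = ∑ i ∈ r.index, f (Coalgebra.counit (R := ℂ) (r.right i) • r.left i) := by
        refine Finset.sum_congr rfl fun i _ => ?_
        simp [convOne, ← Algebra.commutes, Algebra.smul_def]
    _ = f c := by rw [← map_sum, h2]

lemma conv_one_left (f : C →ₗ[ℂ] H) : conv convOne f = f := by
  apply LinearMap.ext; intro c
  set r := Coalgebra.Repr.arbitrary ℂ c
  have h2 : ∑ i ∈ r.index, Coalgebra.counit (R := ℂ) (r.left i) • r.right i = c := by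
    have := congrArg (TensorProduct.lid ℂ C) (Coalgebra.sum_counit_tmul_eq r)
    simp only [map_sum, TensorProduct.lid_tmul, one_smul] at this
    exact this
  rw [conv_apply_repr convOne f r]
  calc ∑ i ∈ r.index, convOne (r.left i) * f (r.right i)
      = ∑ i ∈ r.index, f (Coalgebra.counit (R := ℂ) (r.left i) • r.right i) := by
        refine Finset.sum_congr rfl fun i _ => ?_
        simp [convOne, Algebra.smul_def]
    _ = f c := by rw [← map_sum, h2]

lemma conv_assoc (f g k : C →ₗ[ℂ] H) : conv (conv f g) k = conv f (conv g k) := by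
  apply LinearMap.ext; intro c
  set r := Coalgebra.Repr.arbitrary ℂ c
  set r₁ : ∀ i : r.ι, Coalgebra.Repr ℂ (r.left i) (C × C) := fun i => Coalgebra.Repr.arbitrary ℂ _
  set r₂ : ∀ i : r.ι, Coalgebra.Repr ℂ (r.right i) (C × C) := fun i => Coalgebra.Repr.arbitrary ℂ _
  have key := Coalgebra.sum_map_tmul_tmul_eq (R := ℂ) f g k c (repr := r) (a₁ := r₁) (a₂ := r₂)
  have keym := congrArg (fun t => (LinearMap.mul' ℂ H)
    ((LinearMap.lTensor H (LinearMap.mul' ℂ H)) t)) key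
  simp only [map_sum, LinearMap.lTensor_tmul, LinearMap.mul'_apply] at keym
  rw [conv_apply_repr (conv f g) k r, conv_apply_repr f (conv g k) r]
  calc ∑ i ∈ r.index, conv f g (r.left i) * k (r.right i)
      = ∑ i ∈ r.index, ∑ j ∈ (r₁ i).index,
          f ((r₁ i).left j) * (g ((r₁ i).right j) * k (r.right i)) := by
        refine Finset.sum_congr rfl fun i _ => ?_
        rw [conv_apply_repr f g (r₁ i), Finset.sum_mul]
        simp [mul_assoc]
    _ = ∑ i ∈ r.index, ∑ j ∈ (r₂ i).index,
          f (r.left i) * (g ((r₂ i).left j) * k ((r₂ i).right j)) := keym.symm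
    _ = ∑ i ∈ r.index, f (r.left i) * conv g k (r.right i) := by
        refine Finset.sum_congr rfl fun i _ => ?_
        rw [conv_apply_repr g k (r₂ i), Finset.mul_sum]
end Conv

section Anti

lemma counit_tmul (a b : H) : Coalgebra.counit (R := ℂ) (a ⊗ₜ[ℂ] b) = ε a * ε b := by
  simp [Algebra.smul_def, mul_comm]

lemma comul_tmul_repr (a b : H) (ra : Coalgebra.Repr ℂ a (H × H)) (rb : Coalgebra.Repr ℂ b (H × H)) :
    Coalgebra.comul (R := ℂ) (a ⊗ₜ[ℂ] b) =
      ∑ i ∈ ra.index, ∑ j ∈ rb.index,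
        (ra.left i ⊗ₜ[ℂ] rb.left j) ⊗ₜ[ℂ] (ra.right i ⊗ₜ[ℂ] rb.right j) := by
  have : Coalgebra.comul (R := ℂ) (a ⊗ₜ[ℂ] b) =
      (TensorProduct.tensorTensorTensorComm ℂ H H H H).toLinearMap
        (TensorProduct.map (Δ (H := H)) (Δ (H := H)) (a ⊗ₜ[ℂ] b)) := rfl
  rw [this]
  simp only [TensorProduct.map_tmul]
  rw [← ra.eq, ← rb.eq]
  rw [TensorProduct.sum_tmul]
  rw [map_sum]
  refine Finset.sum_congr rfl fun i _ => ?_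
  rw [TensorProduct.tmul_sum, map_sum]
  refine Finset.sum_congr rfl fun j _ => ?_
  simp

lemma comul_mul_repr (a b : H) (ra : Coalgebra.Repr ℂ a (H × H)) (rb : Coalgebra.Repr ℂ b (H × H)) :
    Δ (a * b) = ∑ i ∈ ra.index, ∑ j ∈ rb.index,
        (ra.left i * rb.left j) ⊗ₜ[ℂ] (ra.right i * rb.right j) := by
  rw [Bialgebra.comul_mul, ← ra.eq, ← rb.eq, Finset.sum_mul_sum]
  simp [Algebra.TensorProduct.tmul_mul_tmul]

lemma claim1 : conv (S (H := H) ∘ₗ LinearMap.mul' ℂ H) (LinearMap.mul' ℂ H)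
    = convOne := by
  apply TensorProduct.ext'; intro a b
  set ra := Coalgebra.Repr.arbitrary ℂ a
  set rb := Coalgebra.Repr.arbitrary ℂ b
  have hval : conv (S (H := H) ∘ₗ LinearMap.mul' ℂ H) (LinearMap.mul' ℂ H) (a ⊗ₜ[ℂ] b)
      = ∑ i ∈ ra.index, ∑ j ∈ rb.index,
          S (ra.left i * rb.left j) * (ra.right i * rb.right j) := by
    simp only [conv, LinearMap.comp_apply, comul_tmul_repr a b ra rb, map_sum,
      TensorProduct.map_tmul, LinearMap.mul'_apply]
  have key := HopfAlgebra.mul_antipode_rTensor_comul_apply (R := ℂ) (a := a * b)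
  rw [comul_mul_repr a b ra rb] at key
  simp only [map_sum, LinearMap.rTensor_tmul, LinearMap.mul'_apply] at key
  rw [hval, key]
  simp [convOne, counit_tmul, Bialgebra.counit_mul, mul_comm]

lemma claim2 : conv (LinearMap.mul' ℂ H)
    ((LinearMap.mul' ℂ H) ∘ₗ (TensorProduct.map (S (H := H)) S) ∘ₗ
      (TensorProduct.comm ℂ H H).toLinearMap) = convOne := by
  apply TensorProduct.ext'; intro a b
  set ra := Coalgebra.Repr.arbitrary ℂ a
  set rb := Coalgebra.Repr.arbitrary ℂ b
  have hval : conv (LinearMap.mul' ℂ H)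
      ((LinearMap.mul' ℂ H) ∘ₗ (TensorProduct.map (S (H := H)) S) ∘ₗ
        (TensorProduct.comm ℂ H H).toLinearMap) (a ⊗ₜ[ℂ] b)
      = ∑ i ∈ ra.index, ∑ j ∈ rb.index,
          (ra.left i * rb.left j) * (S (rb.right j) * S (ra.right i)) := by
    simp only [conv, LinearMap.comp_apply, comul_tmul_repr a b ra rb, map_sum,
      TensorProduct.map_tmul, LinearMap.mul'_apply, TensorProduct.comm_tmul,
      LinearEquiv.coe_coe]
  rw [hval]
  have inner : ∀ i ∈ ra.index, ∑ j ∈ rb.index,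
      (ra.left i * rb.left j) * (S (rb.right j) * S (ra.right i))
      = ε b • (ra.left i * S (ra.right i)) := by
    intro i _
    have : ∀ j, (ra.left i * rb.left j) * (S (rb.right j) * S (ra.right i))
        = ra.left i * ((rb.left j * S (rb.right j)) * S (ra.right i)) := by
      intro j; noncomm_ring
    simp only [this]
    rw [← Finset.mul_sum, ← Finset.sum_mul, HopfAlgebra.sum_mul_antipode_eq_smul rb]
    rw [Algebra.smul_def, Algebra.smul_def, mul_one, ← mul_assoc, ← Algebra.commutes, mul_assoc]
  rw [Finset.sum_congr rfl inner, ← Finset.smul_sum,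
    HopfAlgebra.sum_mul_antipode_eq_smul ra]
  simp only [convOne, LinearMap.comp_apply, counit_tmul, Algebra.linearMap_apply,
    Algebra.algebraMap_eq_smul_one, smul_smul]
  rw [mul_comm]

lemma antipode_mul (a b : H) : S (a * b) = S b * S a := by
  have hmain : (S (H := H) ∘ₗ LinearMap.mul' ℂ H)
      = (LinearMap.mul' ℂ H) ∘ₗ (TensorProduct.map (S (H := H)) S) ∘ₗ
        (TensorProduct.comm ℂ H H).toLinearMap := by
    calc S (H := H) ∘ₗ LinearMap.mul' ℂ H
        = conv (S (H := H) ∘ₗ LinearMap.mul' ℂ H) convOne := (conv_one_right _).symm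
      _ = conv (S (H := H) ∘ₗ LinearMap.mul' ℂ H)
            (conv (LinearMap.mul' ℂ H) _) := by rw [claim2]
      _ = conv (conv (S (H := H) ∘ₗ LinearMap.mul' ℂ H) (LinearMap.mul' ℂ H)) _ :=
            (conv_assoc _ _ _).symm
      _ = conv convOne _ := by rw [claim1]
      _ = _ := conv_one_left _
  have := LinearMap.congr_fun hmain (a ⊗ₜ[ℂ] b)
  simpa using this

end Anti

/-- `Gtp (u ⊗ v) : x ↦ v * x * S u`; the map underlying `Ltp`. -/
def Gtp : H ⊗[ℂ] H →ₗ[ℂ] H →ₗ[ℂ] H :=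
  sandwich ∘ₗ (TensorProduct.map LinearMap.id S) ∘ₗ (TensorProduct.comm ℂ H H).toLinearMap

/-- `Gtm (u ⊗ v) : x ↦ u * x * S v`; the map underlying `Ltm`. -/
def Gtm : H ⊗[ℂ] H →ₗ[ℂ] H →ₗ[ℂ] H :=
  sandwich ∘ₗ (TensorProduct.map LinearMap.id S)

lemma Gtp_mul (u v : H ⊗[ℂ] H) : Gtp u ∘ₗ Gtp v = Gtp (u * v) := by
  induction u using TensorProduct.induction_on with
  | zero => simp [LinearMap.zero_comp]
  | add u u' hu hu' =>
      rw [map_add, LinearMap.add_comp, hu, hu', add_mul, map_add]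
  | tmul u₁ u₂ =>
      induction v using TensorProduct.induction_on with
      | zero => simp [LinearMap.comp_zero]
      | add v v' hv hv' =>
          rw [map_add, LinearMap.comp_add, hv, hv', mul_add, map_add]
      | tmul v₁ v₂ =>
          apply LinearMap.ext; intro x
          simp [Gtp, Algebra.TensorProduct.tmul_mul_tmul, antipode_mul, mul_assoc]

lemma Gtm_mul (u v : H ⊗[ℂ] H) : Gtm u ∘ₗ Gtm v = Gtm (u * v) := by
  induction u using TensorProduct.induction_on with
  | zero => simp [LinearMap.zero_comp]
  | add u u' hu hu' =>
      rw [map_add, LinearMap.add_comp, hu, hu', add_mul, map_add]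
  | tmul u₁ u₂ =>
      induction v using TensorProduct.induction_on with
      | zero => simp [LinearMap.comp_zero]
      | add v v' hv hv' =>
          rw [map_add, LinearMap.comp_add, hv, hv', mul_add, map_add]
      | tmul v₁ v₂ =>
          apply LinearMap.ext; intro x
          simp [Gtm, Algebra.TensorProduct.tmul_mul_tmul, antipode_mul, mul_assoc]

lemma Ltp_comp (h h' : H) : Ltp h ∘ₗ Ltp h' = Ltp (h' * h) := by
  apply LinearMap.ext; intro φ
  apply LinearMap.ext; intro x
  have key := LinearMap.congr_fun (Gtp_mul (Δ h') (Δ h)) x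
  rw [← Bialgebra.comul_mul] at key
  simpa [Ltp, Gtp] using congrArg φ key

lemma Ltm_comp (h h' : H) : Ltm h ∘ₗ Ltm h' = Ltm (h' * h) := by
  apply LinearMap.ext; intro φ
  apply LinearMap.ext; intro x
  have key := LinearMap.congr_fun (Gtm_mul (Δ h') (Δ h)) x
  rw [← Bialgebra.comul_mul] at key
  simpa [Ltm, Gtm] using congrArg φ key

/-- (Type-A fundamental ribbon operators multiply according to the
opposite algebra `(H^cop ⊗ H)^op`.)  With `F^{(a,h)}(τ_L, ±) = ε(h) • T̃^a_±` and
`F^{(a,h)}(τ̃_R, ±) = ε(a) • L̃^h_±`, for each fixed sign and all `a, a', h, h' ∈ H`: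
`F^{(a,h)}(τ_L,±) ∘ F^{(a',h')}(τ_L,±) = F^{(a'a,h'h)}(τ_L,±)` and
`F^{(a,h)}(τ̃_R,±) ∘ F^{(a',h')}(τ̃_R,±) = F^{(a'a,h'h)}(τ̃_R,±)`. -/
theorem statement6 [FiniteDimensional ℂ H] (hS : ∀ x : H, S (S x) = x) :
    ∀ a a' h h' : H,
      ((ε h • Ttp a) ∘ₗ (ε h' • Ttp a') = ε (h' * h) • Ttp (a' * a)) ∧
      ((ε h • Ttm a) ∘ₗ (ε h' • Ttm a') = ε (h' * h) • Ttm (a' * a)) ∧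
      ((ε a • Ltp h) ∘ₗ (ε a' • Ltp h') = ε (a' * a) • Ltp (h' * h)) ∧
      ((ε a • Ltm h) ∘ₗ (ε a' • Ltm h') = ε (a' * a) • Ltm (h' * h)) := by
  intro a a' h h'
  have hε : ∀ u v : H, ε (u * v) = ε v * ε u := fun u v => by
    rw [Bialgebra.counit_mul, mul_comm]
  refine ⟨?_, ?_, ?_, ?_⟩
  · apply LinearMap.ext; intro φ; apply LinearMap.ext; intro x
    simp [Ttp, hε, mul_assoc, mul_smul]
  · apply LinearMap.ext; intro φ; apply LinearMap.ext; intro x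
    simp [Ttm, hε, antipode_mul, mul_assoc, mul_smul]
  · rw [LinearMap.smul_comp, LinearMap.comp_smul, smul_smul, hε a' a, Ltp_comp]
  · rw [LinearMap.smul_comp, LinearMap.comp_smul, smul_smul, hε a' a, Ltm_comp]

end SemidualKitaev
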